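/- Define G₂(n) = Σ_{d | n} Σ_{x > y ≥ 1, gcd(x,y)=1, Y(n,d,x,y) > 1} [ (1/x)·Σ_{1 ≤ m < Y(n,d,x,y)} ( A(n,d,x) + B(x,y)·m ) − (1/x)·( A(n,d,x)·Y(n,d,x,y) + B(x,y)·Y(n,d,x,y)²/2 ) ], where the inner sum runs over integers m. Then for every ε > 0 there is a constant K(ε) > 0 such that |G₂(n)| ≤ K(ε)·n^{3/2+ε} for all positive integers n. -/

import Mathlib

/-- `Y(n,d,x,y) = min( n/(d(x+y)) , (n - d²x²)/(dy) )`. -/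
noncomputable def Ybound (n d x y : ℕ) : ℝ :=
  min ((n : ℝ) / ((d : ℝ) * ((x : ℝ) + y)))
      (((n : ℝ) - (d : ℝ) ^ 2 * (x : ℝ) ^ 2) / ((d : ℝ) * y))

/-- `A(n,d,x) = n/(dx) + dx`. -/
noncomputable def Aterm (n d x : ℕ) : ℝ := (n : ℝ) / ((d : ℝ) * x) + (d : ℝ) * x

/-- `B(x,y) = -y/x`. -/
noncomputable def Bterm (x y : ℕ) : ℝ := -((y : ℝ) / x)

/-- `G₂(n)`; the inner sum `Σ_{1 ≤ m < Y}` runs over the integers `m` with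
`1 ≤ m < Y(n,d,x,y)`, i.e. over `m ∈ Finset.Ico 1 ⌈Y⌉₊`. -/
noncomputable def Gtwo (n : ℕ) : ℝ :=
  ∑ d ∈ n.divisors,
    ∑' p : ℕ × ℕ,
      if p.2 < p.1 ∧ 1 ≤ p.2 ∧ Nat.gcd p.1 p.2 = 1 ∧ 1 < Ybound n d p.1 p.2 then
        (1 / (p.1 : ℝ)) *
            (∑ m ∈ Finset.Ico 1 ⌈Ybound n d p.1 p.2⌉₊, (Aterm n d p.1 + Bterm p.1 p.2 * m))
          - (1 / (p.1 : ℝ)) *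
            (Aterm n d p.1 * Ybound n d p.1 p.2 + Bterm p.1 p.2 * (Ybound n d p.1 p.2) ^ 2 / 2)
      else 0

/-!
Each summand of `G₂(n)` is `1/x` times the error of the rectangle rule for the affine function
`m ↦ A + B m` on `[0, Y]`, which is at most `|A| + |B| Y / 2`. An admissible triple has
`(dx)² < n` and `Y ≤ n/(dx)`, so `A ≤ 2n/(dx)` and the summand is `O(n/(d x²))`. Summing over
the fewer than `x` values of `y`, over `x ≤ √n/d` and then over `d` with `∑ 1/d² ≤ 2` gives
`|G₂(n)| ≤ 6 n^{3/2}`.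
-/

open Finset

lemma sum_Ico_one_linear (a b : ℝ) {N : ℕ} (hN : 1 ≤ N) :
    ∑ m ∈ Ico 1 N, (a + b * m) = (N - 1) * a + b * ((N - 1) * N / 2) := by
  induction N, hN using Nat.le_induction with
  | base => simp
  | succ N hN ih =>
    rw [sum_Ico_succ_top hN, ih]
    push_cast
    ring

lemma abs_sum_Ico_ceil_sub_integral_le (a b : ℝ) {Y : ℝ} (hY : 0 < Y) :
    |∑ m ∈ Ico 1 ⌈Y⌉₊, (a + b * m) - (a * Y + b * Y ^ 2 / 2)| ≤ |a| + |b| * Y / 2 := by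
  set N := ⌈Y⌉₊
  have hYN : Y ≤ N := Nat.le_ceil Y
  have hNY : (N : ℝ) < Y + 1 := Nat.ceil_lt_add_one hY.le
  have hN : 1 ≤ N := Nat.one_le_iff_ne_zero.mpr (Nat.ceil_pos.mpr hY).ne'
  have hN' : (1 : ℝ) ≤ N := by exact_mod_cast hN
  have h₁ : |(N - 1 : ℝ) - Y| ≤ 1 := abs_le.mpr ⟨by linarith, by linarith⟩
  have h₂ : |(N - 1 : ℝ) * N - Y ^ 2| ≤ Y := abs_le.mpr
    ⟨by nlinarith [mul_nonneg (sub_nonneg.mpr hYN) (show (0 : ℝ) ≤ N + Y - 1 by linarith)],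
      by nlinarith⟩
  calc |∑ m ∈ Ico 1 N, (a + b * m) - (a * Y + b * Y ^ 2 / 2)|
      = |a * ((N - 1) - Y) + b * (((N - 1) * N - Y ^ 2) / 2)| := by
        rw [sum_Ico_one_linear a b hN]; ring_nf
    _ ≤ |a| * |(N - 1 : ℝ) - Y| + |b| * (|(N - 1 : ℝ) * N - Y ^ 2| / 2) := by
        grw [abs_add_le, abs_mul, abs_mul, abs_div, abs_two]
    _ ≤ |a| * 1 + |b| * (Y / 2) := by gcongr
    _ = |a| + |b| * Y / 2 := by ring

section Bounds

variable {n d x y : ℕ}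

lemma sq_lt_of_one_lt_Ybound (hd : 0 < d) (hy : 0 < y) (hY : 1 < Ybound n d x y) :
    ((d : ℝ) * x) ^ 2 < n := by
  have hdy : (0 : ℝ) < d * y := by positivity
  have h := hY.trans_le (min_le_right _ _)
  rw [lt_div_iff₀ hdy] at h
  nlinarith

lemma Ybound_le (hd : 0 < d) (hx : 0 < x) : Ybound n d x y ≤ n / (d * x) :=
  (min_le_left _ _).trans <| div_le_div_of_nonneg_left n.cast_nonneg (by positivity) <| by
    gcongr; exact le_add_of_nonneg_right y.cast_nonneg

lemma Aterm_le (hdx : 0 < (d : ℝ) * x) (h : ((d : ℝ) * x) ^ 2 ≤ n) :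
    Aterm n d x ≤ 2 * (n / (d * x)) := by
  have : (d : ℝ) * x ≤ n / (d * x) := by rw [le_div_iff₀ hdx]; nlinarith
  rw [Aterm]; linarith

lemma abs_Bterm_le (h : y ≤ x) : |Bterm x y| ≤ 1 := by
  rw [Bterm, abs_neg, abs_div, Nat.abs_cast, Nat.abs_cast]
  exact div_le_one_of_le₀ (by exact_mod_cast h) x.cast_nonneg

end Bounds

noncomputable def GtwoTerm (n d : ℕ) (p : ℕ × ℕ) : ℝ :=
  if p.2 < p.1 ∧ 1 ≤ p.2 ∧ Nat.gcd p.1 p.2 = 1 ∧ 1 < Ybound n d p.1 p.2 then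
    (1 / (p.1 : ℝ)) *
        (∑ m ∈ Finset.Ico 1 ⌈Ybound n d p.1 p.2⌉₊, (Aterm n d p.1 + Bterm p.1 p.2 * m))
      - (1 / (p.1 : ℝ)) *
        (Aterm n d p.1 * Ybound n d p.1 p.2 + Bterm p.1 p.2 * (Ybound n d p.1 p.2) ^ 2 / 2)
  else 0

lemma Gtwo_eq (n : ℕ) : Gtwo n = ∑ d ∈ n.divisors, ∑' p, GtwoTerm n d p := rfl

section GtwoTerm

variable {n d : ℕ}

lemma abs_GtwoTerm_le (hd : 0 < d) (x y : ℕ) :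
    |GtwoTerm n d (x, y)| ≤ 3 * n / (d * x ^ 2) := by
  unfold GtwoTerm
  split_ifs with h
  swap
  · rw [abs_zero]; positivity
  obtain ⟨hxy, hy, -, hY⟩ := h
  dsimp only at hxy hy hY ⊢
  have hx : 0 < x := Nat.zero_lt_of_lt hxy
  have hdx : (0 : ℝ) < d * x := by positivity
  have hY₀ : 0 < Ybound n d x y := one_pos.trans hY
  have hYle := Ybound_le (n := n) (y := y) hd hx
  have hA := Aterm_le hdx (sq_lt_of_one_lt_Ybound hd hy hY).le
  have hA₀ : 0 ≤ Aterm n d x := by rw [Aterm]; positivity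
  have hB := abs_Bterm_le hxy.le
  rw [← mul_sub, abs_mul, abs_of_pos (by positivity : (0 : ℝ) < 1 / x)]
  calc 1 / (x : ℝ) * |_|
      ≤ 1 / x * (|Aterm n d x| + |Bterm x y| * Ybound n d x y / 2) := by
        gcongr; exact abs_sum_Ico_ceil_sub_integral_le _ _ hY₀
    _ ≤ 1 / x * (3 * (n / (d * x))) := by
        gcongr
        rw [abs_of_nonneg hA₀]
        nlinarith
    _ = 3 * n / (d * x ^ 2) := by field_simp

lemma support_GtwoTerm_subset (hd : 0 < d) :
    Function.support (GtwoTerm n d) ⊆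
      ((Icc 1 (n.sqrt / d) ×ˢ range (n.sqrt / d)).filter fun p => p.2 < p.1 :
        Finset (ℕ × ℕ)) := by
  rintro ⟨x, y⟩ hp
  rw [Function.mem_support, GtwoTerm] at hp
  split_ifs at hp with h
  swap
  · exact absurd rfl hp
  obtain ⟨hxy, hy, -, hY⟩ := h
  dsimp only at hxy hy hY
  have hsq : d * x * (d * x) ≤ n := by
    have := sq_lt_of_one_lt_Ybound hd hy hY
    exact_mod_cast (by push_cast; nlinarith : ((d * x * (d * x) : ℕ) : ℝ) ≤ n)
  have hxK : x ≤ n.sqrt / d :=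
    (Nat.le_div_iff_mul_le hd).mpr (by rw [mul_comm]; exact Nat.le_sqrt.mpr hsq)
  simp only [mem_coe, mem_filter, mem_product, mem_Icc, mem_range]
  omega

lemma abs_tsum_GtwoTerm_le (hd : 0 < d) :
    |∑' p, GtwoTerm n d p| ≤ 3 * n * √n / d ^ 2 := by
  set K := n.sqrt / d
  have hmem : ∀ p : ℕ × ℕ,
      p ∈ (Icc 1 K ×ˢ range K).filter (fun p => p.2 < p.1) ↔
        p.1 ∈ Icc 1 K ∧ p.2 ∈ range p.1 := by
    rintro ⟨x, y⟩
    simp only [mem_filter, mem_product, mem_Icc, mem_range]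
    omega
  have hK : (K : ℝ) ≤ √n / d :=
    Nat.cast_div_le.trans (by gcongr; exact Real.nat_sqrt_le_real_sqrt)
  rw [tsum_eq_sum' (support_GtwoTerm_subset hd)]
  calc |∑ p ∈ (Icc 1 K ×ˢ range K).filter (fun p => p.2 < p.1), GtwoTerm n d p|
      ≤ ∑ p ∈ (Icc 1 K ×ˢ range K).filter (fun p => p.2 < p.1),
          3 * n / (d * (p.1 : ℝ) ^ 2) :=
        (abs_sum_le_sum_abs _ _).trans (sum_le_sum fun p _ => abs_GtwoTerm_le hd p.1 p.2)
    _ = ∑ x ∈ Icc 1 K, x * (3 * n / (d * (x : ℝ) ^ 2)) := by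
        rw [sum_finset_product _ _ _ hmem]
        simp [sum_const, card_range, nsmul_eq_mul]
    _ ≤ ∑ x ∈ Icc 1 K, 3 * n / (d : ℝ) := by
        refine sum_le_sum fun x hx => ?_
        have hx : (1 : ℝ) ≤ x := by exact_mod_cast (mem_Icc.mp hx).1
        rw [show (x : ℝ) * (3 * n / (d * x ^ 2)) = 3 * n / d / x by field_simp]
        exact div_le_self (by positivity) hx
    _ = K * (3 * n / d) := by rw [sum_const, Nat.card_Icc, Nat.add_sub_cancel, nsmul_eq_mul]
    _ ≤ √n / d * (3 * n / d) := by gcongr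
    _ = 3 * n * √n / d ^ 2 := by ring

end GtwoTerm

lemma sum_divisors_inv_sq_le_two (n : ℕ) : ∑ d ∈ n.divisors, ((d : ℝ) ^ 2)⁻¹ ≤ 2 := by
  have hsub : n.divisors ⊆ Ioo 0 (n + 1) := fun d hd =>
    mem_Ioo.mpr ⟨Nat.pos_of_mem_divisors hd, Nat.lt_succ_of_le (Nat.divisor_le hd)⟩
  calc ∑ d ∈ n.divisors, ((d : ℝ) ^ 2)⁻¹
      ≤ ∑ d ∈ Ioo 0 (n + 1), ((d : ℝ) ^ 2)⁻¹ :=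
        sum_le_sum_of_subset_of_nonneg hsub (by intros; positivity)
    _ ≤ 2 := (sum_Ioo_inv_sq_le 0 (n + 1)).trans_eq (by norm_num)

lemma abs_Gtwo_le (n : ℕ) : |Gtwo n| ≤ 6 * (n : ℝ) ^ (3 / 2 : ℝ) := by
  have hpow : (n : ℝ) ^ (3 / 2 : ℝ) = n * √n := by
    rw [Real.sqrt_eq_rpow, show (3 / 2 : ℝ) = 1 + 1 / 2 by norm_num,
      Real.rpow_add' n.cast_nonneg (by norm_num), Real.rpow_one]
  calc |Gtwo n| ≤ ∑ d ∈ n.divisors, |∑' p, GtwoTerm n d p| := by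
        rw [Gtwo_eq]; exact abs_sum_le_sum_abs _ _
    _ ≤ ∑ d ∈ n.divisors, 3 * n * √n * ((d : ℝ) ^ 2)⁻¹ := sum_le_sum fun d hd =>
        (abs_tsum_GtwoTerm_le (Nat.pos_of_mem_divisors hd)).trans_eq (div_eq_mul_inv _ _)
    _ ≤ 3 * n * √n * 2 := by
        rw [← mul_sum]; gcongr; exact sum_divisors_inv_sq_le_two n
    _ = 6 * (n : ℝ) ^ (3 / 2 : ℝ) := by rw [hpow]; ring

theorem stmt_5 :
    ∀ ε : ℝ, 0 < ε → ∃ K : ℝ, 0 < K ∧ ∀ n : ℕ, 0 < n →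
      |Gtwo n| ≤ K * (n : ℝ) ^ ((3 : ℝ) / 2 + ε) := by
  intro ε hε
  refine ⟨6, by norm_num, fun n hn => (abs_Gtwo_le n).trans ?_⟩
  gcongr
  · exact_mod_cast hn
  · linarith
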